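/- Let R be a positive definite r×r matrix, S a positive definite n×n matrix, H an r×n matrix, y ∈ ℝʳ, m ∈ ℝⁿ, and set B = S Hᵀ (H S Hᵀ + R)⁻¹. Then (HᵀR⁻¹H + S⁻¹)⁻¹ (HᵀR⁻¹ y + S⁻¹ m) = m + B (y − H m). -/
import Mathlib


open Matrix

/-- Conversion of the information-form solution of the normal equations into the
Kalman-filter-style update: with `R` (`r × r`) and `S` (`n × n`) positive
definite, `H` an `r × n` matrix, `y ∈ ℝʳ`, `m ∈ ℝⁿ` and
`B = S Hᵀ (H S Hᵀ + R)⁻¹`, one has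
`(HᵀR⁻¹H + S⁻¹)⁻¹ (HᵀR⁻¹ y + S⁻¹ m) = m + B (y − H m)`. -/
theorem information_form_to_kalman_update {r n : ℕ}
    (R : Matrix (Fin r) (Fin r) ℝ) (S : Matrix (Fin n) (Fin n) ℝ)
    (H : Matrix (Fin r) (Fin n) ℝ)
    (hR : R.PosDef) (hS : S.PosDef)
    (y : Fin r → ℝ) (m : Fin n → ℝ)
    (B : Matrix (Fin n) (Fin r) ℝ)
    (hB : B = S * Hᵀ * (H * S * Hᵀ + R)⁻¹) :
    (Hᵀ * R⁻¹ * H + S⁻¹)⁻¹ *ᵥ (Hᵀ *ᵥ (R⁻¹ *ᵥ y) + S⁻¹ *ᵥ m)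
      = m + B *ᵥ (y - H *ᵥ m) := by
  have hRi := hR.inv
  have hSi := hS.inv
  set M := Hᵀ * R⁻¹ * H + S⁻¹ with hMdef
  set A := H * S * Hᵀ + R with hAdef
  have hM : M.PosDef := by
    have h1 : (Hᵀ * R⁻¹ * H).PosSemidef := by
      have := hRi.posSemidef.conjTranspose_mul_mul_same H
      simpa using this
    exact Matrix.PosDef.posSemidef_add h1 hSi
  have hA : A.PosDef := by
    have h1 : (H * S * Hᵀ).PosSemidef := by
      have := hS.posSemidef.mul_mul_conjTranspose_same H
      simpa using this
    exact Matrix.PosDef.posSemidef_add h1 hR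
  have hMu : IsUnit M.det := isUnit_iff_ne_zero.mpr hM.det_pos.ne'
  have hAu : IsUnit A.det := isUnit_iff_ne_zero.mpr hA.det_pos.ne'
  have h1 : S⁻¹ * S = 1 := nonsing_inv_mul S (isUnit_iff_ne_zero.mpr hS.det_pos.ne')
  have h2 : R⁻¹ * R = 1 := nonsing_inv_mul R (isUnit_iff_ne_zero.mpr hR.det_pos.ne')
  have e1 : S⁻¹ * (S * Hᵀ) = Hᵀ := by rw [← Matrix.mul_assoc, h1, Matrix.one_mul]
  have e2 : Hᵀ * R⁻¹ * R = Hᵀ := by rw [Matrix.mul_assoc, h2, Matrix.mul_one]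
  have key : M * (S * Hᵀ) = Hᵀ * R⁻¹ * A := by
    rw [hMdef, hAdef, Matrix.add_mul, Matrix.mul_add, e1, e2]
    simp [Matrix.mul_assoc]
  have hBeq : B = M⁻¹ * (Hᵀ * R⁻¹) := by
    rw [hB]
    have : S * Hᵀ = M⁻¹ * (Hᵀ * R⁻¹ * A) := by
      rw [← key, ← Matrix.mul_assoc, nonsing_inv_mul M hMu, Matrix.one_mul]
    rw [this, Matrix.mul_assoc, Matrix.mul_assoc, Matrix.mul_assoc,
      mul_nonsing_inv A hAu, Matrix.mul_one]
  have hIS : M⁻¹ * S⁻¹ = 1 - B * H := by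
    have hS' : S⁻¹ = M - Hᵀ * R⁻¹ * H := by rw [hMdef]; abel
    rw [hS', Matrix.mul_sub, nonsing_inv_mul M hMu, hBeq]
    simp [Matrix.mul_assoc]
  calc M⁻¹ *ᵥ (Hᵀ *ᵥ (R⁻¹ *ᵥ y) + S⁻¹ *ᵥ m)
      = (M⁻¹ * (Hᵀ * R⁻¹)) *ᵥ y + (M⁻¹ * S⁻¹) *ᵥ m := by
        simp [mulVec_add, mulVec_mulVec, Matrix.mul_assoc]
    _ = B *ᵥ y + (1 - B * H) *ᵥ m := by rw [← hBeq, hIS]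
    _ = m + B *ᵥ (y - H *ᵥ m) := by
        rw [sub_mulVec, one_mulVec, mulVec_sub, ← mulVec_mulVec]
        abel
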